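/- Abel's identity special case: for all real x > 0, y ≥ 0 and n ≥ 0, the sum over s from 0 to n of C(n,s) (x+s)^(s-1) (y+n-s)^(n-s) equals x^{-1} (x+y+n)^n. -/

import Mathlib

/-!
Write `F_n(y) = Σ_s C(n,s) a_s (y+n-s)^(n-s)` for a fixed sequence `a`. Since
`C(n+1,s)(n+1-s) = (n+1) C(n,s)`, one has `F_{n+1}' (y) = (n+1) F_n(y+1)`, and
`G_n(y) = x⁻¹ (x+y+n)^n` satisfies the same recursion. For `a_s = (x+s)^(s-1)` the identity
`F_n = G_n` then follows by induction on `n`, once `F_{n+1}` and `G_{n+1}` agree at one point: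
at `y = -x-(n+1)` the sum becomes `Σ_s (-1)^(n+1-s) C(n+1,s) (x+s)^n`, an `(n+1)`-st forward
difference of a polynomial of degree `n`, hence `0 = G_{n+1}(y)`.
-/

open Finset

theorem sum_neg_one_pow_mul_choose_mul_add_pow_eq_zero {R : Type*} [CommRing R] {j n : ℕ}
    (h : j < n) (x : R) :
    ∑ k ∈ range (n + 1), (-1 : R) ^ (n - k) * n.choose k * (x + k) ^ j = 0 := by
  have := congr_fun (fwdDiff_iter_pow_eq_zero_of_lt (R := R) h) x
  rw [fwdDiff_iter_eq_sum_shift] at this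
  simpa [zsmul_eq_mul] using this

/-- The paper's `A_n(x,y;p,0)` is `abelSum (fun s => (x + s) ^ (s + p)) n y`. -/
noncomputable def abelSum (a : ℕ → ℝ) (n : ℕ) (y : ℝ) : ℝ :=
  ∑ s ∈ range (n + 1), (n.choose s : ℝ) * a s * (y + n - s) ^ (n - s)

theorem abelSum_zero (a : ℕ → ℝ) (y : ℝ) : abelSum a 0 y = a 0 := by
  simp [abelSum]

theorem hasDerivAt_abelSum (a : ℕ → ℝ) (n : ℕ) (y : ℝ) :
    HasDerivAt (abelSum a (n + 1)) ((n + 1) * abelSum a n (y + 1)) y := by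
  have hterm (s : ℕ) : HasDerivAt
      (fun y : ℝ => ((n + 1).choose s : ℝ) * a s * (y + (n + 1 : ℕ) - s) ^ (n + 1 - s))
      ((n + 1) * ((n.choose s : ℝ) * a s * (y + 1 + n - s) ^ (n - s))) y := by
    have hchoose : ((n + 1).choose s : ℝ) * (n + 1 - s : ℕ) = (n + 1) * n.choose s := by
      exact_mod_cast (mul_comm (n.choose s) (n + 1) ▸ Nat.choose_mul_succ_eq n s).symm
    have hbase : HasDerivAt (fun y : ℝ => y + (n + 1 : ℕ) - s) 1 y :=
      ((hasDerivAt_id y).add_const _).sub_const _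
    refine ((hbase.pow (n + 1 - s)).const_mul (((n + 1).choose s : ℝ) * a s)).congr_deriv ?_
    rw [show n + 1 - s - 1 = n - s by omega]
    push_cast
    linear_combination (a s * (y + 1 + n - s) ^ (n - s)) * hchoose
  have hsum := HasDerivAt.fun_sum (u := range (n + 2)) fun s _ => hterm s
  rw [sum_range_succ, Nat.choose_succ_self, Nat.cast_zero, zero_mul, zero_mul, mul_zero,
    add_zero, ← mul_sum] at hsum
  exact hsum

theorem abelSum_zpow_sub_one_neg {x : ℝ} (hx : x ≠ 0) {n : ℕ} (hn : 0 < n) :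
    abelSum (fun s => (x + s) ^ ((s : ℤ) - 1)) n (-x - n) = 0 := by
  have hterm (s : ℕ) (hs : s ≤ n) :
      (n.choose s : ℝ) * (x + s) ^ ((s : ℤ) - 1) * (-x - n + n - s) ^ (n - s)
        = (-1) ^ (n - s) * n.choose s * (x + s) ^ (n - 1) := by
    have hpow : (x + s) ^ ((s : ℤ) - 1) * (x + s) ^ (n - s) = (x + s) ^ (n - 1) := by
      rcases s with _ | t
      · simp [pow_sub₀ x hx hn, mul_comm]
      · rw [show ((t + 1 : ℕ) : ℤ) - 1 = t by lia, zpow_natCast, ← pow_add]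
        congr 1
        omega
    rw [show -x - n + n - s = -(x + s) by ring, neg_pow, ← hpow]
    ring
  unfold abelSum
  rw [sum_congr rfl fun s hs => hterm s (Nat.lt_succ_iff.mp (mem_range.mp hs))]
  exact sum_neg_one_pow_mul_choose_mul_add_pow_eq_zero (Nat.sub_lt hn one_pos) x

theorem abelSum_zpow_sub_one {x : ℝ} (hx : x ≠ 0) (n : ℕ) (y : ℝ) :
    abelSum (fun s => (x + s) ^ ((s : ℤ) - 1)) n y = x⁻¹ * (x + y + n) ^ n := by
  induction n generalizing y with
  | zero => simp [abelSum_zero]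
  | succ n ih =>
    have hF (y : ℝ) : HasDerivAt (abelSum (fun s => (x + s) ^ ((s : ℤ) - 1)) (n + 1))
        ((n + 1) * (x⁻¹ * (x + (y + 1) + n) ^ n)) y := by
      rw [← ih]
      exact hasDerivAt_abelSum _ n y
    have hG (y : ℝ) : HasDerivAt (fun y => x⁻¹ * (x + y + (n + 1 : ℕ)) ^ (n + 1))
        ((n + 1) * (x⁻¹ * (x + (y + 1) + n) ^ n)) y := by
      have hbase : HasDerivAt (fun y : ℝ => x + y + (n + 1 : ℕ)) 1 y :=
        ((hasDerivAt_id y).const_add x).add_const _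
      refine ((hbase.pow (n + 1)).const_mul x⁻¹).congr_deriv ?_
      push_cast
      ring
    have hroot : abelSum (fun s => (x + s) ^ ((s : ℤ) - 1)) (n + 1) (-x - (n + 1 : ℕ))
        = x⁻¹ * (x + (-x - (n + 1 : ℕ)) + (n + 1 : ℕ)) ^ (n + 1) := by
      have hbase : x + (-x - (n + 1 : ℕ)) + (n + 1 : ℕ) = 0 := by ring
      rw [abelSum_zpow_sub_one_neg hx n.succ_pos, hbase, zero_pow n.succ_ne_zero, mul_zero]
    have hFG := eq_of_fderiv_eq (fun y => (hF y).differentiableAt)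
      (fun y => (hG y).differentiableAt)
      (fun y => (hF y).hasFDerivAt.fderiv.trans (hG y).hasFDerivAt.fderiv.symm) _ hroot
    exact congr_fun hFG y

theorem abel_neg_one_zero_general (n : ℕ) (x y : ℝ) (hx : 0 < x) :
    ∑ s ∈ Finset.range (n + 1),
        (n.choose s : ℝ) * (x + s) ^ ((s : ℤ) - 1) * (y + n - s) ^ (n - s)
      = x⁻¹ * (x + y + n) ^ n :=
  abelSum_zpow_sub_one hx.ne' n y

/-- **Abel's identity, special case `A_n(x,y;-1,0)`.** For `x > 0`, `y ≥ 0` and `n ≥ 0`,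
`Σ_{s=0}^n C(n,s) (x+s)^(s-1) (y+n-s)^(n-s) = x⁻¹ (x+y+n)^n`. -/
theorem abel_neg_one_zero (n : ℕ) (x y : ℝ) (hx : 0 < x) (hy : 0 ≤ y) :
    ∑ s ∈ Finset.range (n + 1),
        (n.choose s : ℝ) * (x + s) ^ ((s : ℤ) - 1) * (y + n - s) ^ (n - s)
      = x⁻¹ * (x + y + n) ^ n :=
  abel_neg_one_zero_general n x y hx
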